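/- arXiv:1501.04401 — 2 statements merged into one kernel-verified Lean document; each statement's English description precedes it below -/
import Mathlib

section
/- If {a, b, c, d, e} is a Diophantine quintuple with a < b < c < d < e such that the triple {a, b, d} is of kind 2(i), then b ≥ 1680 and d ≥ 10^8. -/
/-- `DiophantineQuintuple a b c d e` says that `a < b < c < d < e` are positive integers
such that the product of any two of them is one less than a perfect square. -/
def DiophantineQuintuple (a b c d e : ℕ) : Prop :=
  0 < a ∧ a < b ∧ b < c ∧ c < d ∧ d < e ∧
  (∃ k : ℕ, a * b + 1 = k ^ 2) ∧ (∃ k : ℕ, a * c + 1 = k ^ 2) ∧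
  (∃ k : ℕ, a * d + 1 = k ^ 2) ∧ (∃ k : ℕ, a * e + 1 = k ^ 2) ∧
  (∃ k : ℕ, b * c + 1 = k ^ 2) ∧ (∃ k : ℕ, b * d + 1 = k ^ 2) ∧
  (∃ k : ℕ, b * e + 1 = k ^ 2) ∧ (∃ k : ℕ, c * d + 1 = k ^ 2) ∧
  (∃ k : ℕ, c * e + 1 = k ^ 2) ∧ (∃ k : ℕ, d * e + 1 = k ^ 2)

/-- The triple `{a, b, d}` is of kind 2(i): it is of the second kind
(`b > 4a` and `b² ≤ d ≤ b⁵`) and moreover `4ab + a + b ≤ c ≤ b^(3/2)`. -/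
def Kind2i (a b c d : ℕ) : Prop :=
  b > 4 * a ∧ b ^ 2 ≤ d ∧ d ≤ b ^ 5 ∧
  4 * a * b + a + b ≤ c ∧ (c : ℝ) ≤ (b : ℝ) ^ ((3 : ℝ) / 2)

/-!
For a Diophantine triple `{p, q, c}` with `pq + 1 = r²`, `pc + 1 = s²`, `qc + 1 = t²`, put
`d₋ = p + q + c + 2pqc − 2rst`. If `c > p + q + 2r`, then `0 < d₋ < c − p − q`, the triple
`{p, q, d₋}` is again Diophantine, and `c` is its standard extension `d₊(p, q, d₋)`; hence
`c ≥ 4pq·d₋ + p + q + d₋ + 2`.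

Applied to `{a, b, c}` with `N = d₋`, the bound `c ≤ b^{3/2}` forces `16(aN)² < b`. If `b < 1680`,
then `aN ≤ 10` and `aN + 1` is a square, so `aN ∈ {3, 8}`, while `ab + 1` and `Nb + 1` are squares;
a finite search over these Pell-type pairs (`b + 1` and `3b + 1` are both squares only for
`b = 0, 8, 120, 1680, …`) contradicts `16(aN)² < b`. Since `d ≥ b²`, the same bound applies to
`{b, c, d}` and gives `d ≥ 4bc ≥ 48b² > 10⁸`, because `c > 4abN ≥ 12b`.
-/

/-- The standard extensions `d₋ ≤ d₊` of `{p, q, c}`: the two roots in `d` of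
`(c + d − p − q)² = 4(pq + 1)(cd + 1)`. -/
def dMinus (p q c r s t : ℤ) : ℤ := p + q + c + 2 * p * q * c - 2 * r * s * t

def dPlus (p q c r s t : ℤ) : ℤ := p + q + c + 2 * p * q * c + 2 * r * s * t

section StandardExtension

variable {p q c r s t : ℤ}

theorem mul_dMinus_add_one_left (hr : p * q + 1 = r ^ 2) (hs : p * c + 1 = s ^ 2)
    (ht : q * c + 1 = t ^ 2) : p * dMinus p q c r s t + 1 = (r * s - p * t) ^ 2 := by
  unfold dMinus; linear_combination s ^ 2 * hr + (p * q + 1) * hs + p ^ 2 * ht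

theorem mul_dMinus_add_one_right (hr : p * q + 1 = r ^ 2) (hs : p * c + 1 = s ^ 2)
    (ht : q * c + 1 = t ^ 2) : q * dMinus p q c r s t + 1 = (r * t - q * s) ^ 2 := by
  unfold dMinus; linear_combination t ^ 2 * hr + q ^ 2 * hs + (p * q + 1) * ht

theorem dMinus_mul_dPlus (hr : p * q + 1 = r ^ 2) (hs : p * c + 1 = s ^ 2)
    (ht : q * c + 1 = t ^ 2) :
    dMinus p q c r s t * dPlus p q c r s t = (c - p - q) ^ 2 - 4 * (p * q + 1) := by
  unfold dMinus dPlus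
  linear_combination 4 * s ^ 2 * t ^ 2 * hr + 4 * (p * q + 1) * t ^ 2 * hs
    + 4 * (p * q + 1) * (p * c + 1) * ht

theorem sq_add_dMinus_sub (hr : p * q + 1 = r ^ 2) (hs : p * c + 1 = s ^ 2)
    (ht : q * c + 1 = t ^ 2) :
    (c + dMinus p q c r s t - p - q) ^ 2 = 4 * (p * q + 1) * (c * dMinus p q c r s t + 1) := by
  have hcd : c * dMinus p q c r s t + 1 = (s * t - c * r) ^ 2 := by
    unfold dMinus; linear_combination t ^ 2 * hs + (p * c + 1) * ht + c ^ 2 * hr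
  rw [hcd]; unfold dMinus
  linear_combination 4 * (c ^ 2 * (p * q + 1) - s ^ 2 * t ^ 2) * hr

theorem le_dPlus (hp : 0 ≤ p) (hq : 0 ≤ q) (hc : 0 ≤ c) (hrst : 0 ≤ r * s * t) :
    c ≤ dPlus p q c r s t := by
  unfold dPlus; nlinarith [mul_nonneg (mul_nonneg hp hq) hc]

theorem dMinus_pos (hr : p * q + 1 = r ^ 2) (hs : p * c + 1 = s ^ 2) (ht : q * c + 1 = t ^ 2)
    (hp : 0 ≤ p) (hq : 0 ≤ q) (hr₀ : 0 ≤ r) (hrst : 0 ≤ r * s * t)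
    (hc : p + q + 2 * r < c) : 0 < dMinus p q c r s t := by
  have hD : c ≤ dPlus p q c r s t := le_dPlus hp hq (by linarith) hrst
  refine pos_of_mul_pos_left ?_ (by linarith : 0 ≤ dPlus p q c r s t)
  rw [dMinus_mul_dPlus hr hs ht, hr]
  nlinarith

theorem dMinus_lt (hr : p * q + 1 = r ^ 2) (hs : p * c + 1 = s ^ 2) (ht : q * c + 1 = t ^ 2)
    (hp : 0 ≤ p) (hq : 0 ≤ q) (hrst : 0 ≤ r * s * t) (hc : p + q < c) :
    dMinus p q c r s t < c - p - q := by
  have hD : c ≤ dPlus p q c r s t := le_dPlus hp hq (by linarith) hrst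
  refine lt_of_mul_lt_mul_right ?_ (by linarith : 0 ≤ dPlus p q c r s t)
  rw [dMinus_mul_dPlus hr hs ht]
  nlinarith [mul_le_mul_of_nonneg_left (by linarith : c - p - q ≤ dPlus p q c r s t)
    (by linarith : 0 ≤ c - p - q), mul_nonneg hp hq]

end StandardExtension

theorem sq_sub_extension_of_sq_add_sub {p q c f : ℤ}
    (h : (c + f - p - q) ^ 2 = 4 * (p * q + 1) * (c * f + 1)) :
    (c - (p + q + f + 2 * p * q * f)) ^ 2 = 4 * (p * q + 1) * (p * f + 1) * (q * f + 1) := by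
  linear_combination h

theorem mul_mul_add_one_le_mul_mul {p q f r x y : ℤ} (hp : 0 ≤ p) (hq : 0 ≤ q) (hf : 0 ≤ f)
    (hr₀ : 0 ≤ r) (hx₀ : 0 ≤ x) (hy₀ : 0 ≤ y)
    (hr : p * q + 1 = r ^ 2) (hx : p * f + 1 = x ^ 2) (hy : q * f + 1 = y ^ 2) :
    p * q * f + 1 ≤ r * x * y := by
  refine (pow_le_pow_iff_left₀ (by positivity) (by positivity) two_ne_zero).mp ?_
  rw [mul_pow, mul_pow, ← hr, ← hx, ← hy]
  nlinarith [mul_nonneg (mul_nonneg hp hq) (sq_nonneg (f - 1)), mul_nonneg hp hf,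
    mul_nonneg hq hf, mul_nonneg (mul_nonneg (mul_nonneg hp hq) hf) (add_nonneg hp hq)]

theorem Int.exists_lower_triple {p q c r s t : ℤ} (hp : 0 < p) (hq : 0 < q) (hr₀ : 0 ≤ r)
    (hrst : 0 ≤ r * s * t) (hr : p * q + 1 = r ^ 2) (hs : p * c + 1 = s ^ 2)
    (ht : q * c + 1 = t ^ 2) (hc : p + q + 2 * r < c) :
    ∃ f x y : ℤ, 0 < f ∧ 0 ≤ x ∧ 0 ≤ y ∧ p * f + 1 = x ^ 2 ∧ q * f + 1 = y ^ 2 ∧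
      4 * p * q * f + p + q + f + 2 ≤ c := by
  set f := dMinus p q c r s t
  have hf : 0 < f := dMinus_pos hr hs ht hp.le hq.le hr₀ hrst hc
  have hfc : f < c - p - q := dMinus_lt hr hs ht hp.le hq.le hrst (by linarith)
  have hx : p * f + 1 = |r * s - p * t| ^ 2 := by
    rw [sq_abs]; exact mul_dMinus_add_one_left hr hs ht
  have hy : q * f + 1 = |r * t - q * s| ^ 2 := by
    rw [sq_abs]; exact mul_dMinus_add_one_right hr hs ht
  refine ⟨f, _, _, hf, abs_nonneg _, abs_nonneg _, hx, hy, ?_⟩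
  have hrxy := mul_mul_add_one_le_mul_mul hp.le hq.le hf.le hr₀ (abs_nonneg _) (abs_nonneg _) hr hx hy
  -- `c` is `d₊` or `d₋` of `{p, q, f}`; `hrxy` and `hfc` put the latter below `c`.
  have hsq : (c - (p + q + f + 2 * p * q * f)) ^ 2
      = (2 * r * |r * s - p * t| * |r * t - q * s|) ^ 2 := by
    rw [sq_sub_extension_of_sq_add_sub (sq_add_dMinus_sub hr hs ht), hr, hx, hy]; ring
  rcases sq_eq_sq_iff_eq_or_eq_neg.mp hsq with h | h <;> linarith

theorem Nat.exists_lower_triple {p q c r s t : ℕ} (hp : 0 < p) (hq : 0 < q)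
    (hr : p * q + 1 = r ^ 2) (hs : p * c + 1 = s ^ 2) (ht : q * c + 1 = t ^ 2)
    (hc : p + q + 2 * r < c) :
    ∃ f x y : ℕ, 0 < f ∧ p * f + 1 = x ^ 2 ∧ q * f + 1 = y ^ 2 ∧
      4 * p * q * f + p + q + f + 2 ≤ c := by
  obtain ⟨f, x, y, hf, hx₀, hy₀, hx, hy, hfc⟩ :=
    Int.exists_lower_triple (p := p) (q := q) (c := c) (r := r) (s := s) (t := t)
      (by exact_mod_cast hp) (by exact_mod_cast hq) (by positivity) (by positivity)
      (by exact_mod_cast hr) (by exact_mod_cast hs) (by exact_mod_cast ht)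
      (by exact_mod_cast hc)
  lift f to ℕ using hf.le
  lift x to ℕ using hx₀
  lift y to ℕ using hy₀
  exact ⟨f, x, y, by exact_mod_cast hf, by exact_mod_cast hx, by exact_mod_cast hy,
    by exact_mod_cast hfc⟩

theorem sq_le_cube_of_le_rpow {b c : ℕ} (h : (c : ℝ) ≤ (b : ℝ) ^ ((3 : ℝ) / 2)) :
    c ^ 2 ≤ b ^ 3 := by
  have : (c : ℝ) ^ 2 ≤ (b : ℝ) ^ 3 :=
    calc (c : ℝ) ^ 2 ≤ ((b : ℝ) ^ ((3 : ℝ) / 2)) ^ 2 := pow_le_pow_left₀ (by positivity) h 2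
      _ = (b : ℝ) ^ 3 := by
        rw [← Real.rpow_natCast, ← Real.rpow_mul (by positivity)]; norm_num
  exact_mod_cast this

theorem le_of_add_one_eq_sq {n r : ℕ} (hn : 0 < n) (h : n + 1 = r ^ 2) : r ≤ n := by
  nlinarith

theorem three_le_of_add_one_eq_sq {k x : ℕ} (hk : 0 < k) (h : k + 1 = x ^ 2) : 3 ≤ k := by
  have : 2 ≤ x := by
    by_contra! hx; interval_cases x <;> omega
  nlinarith

theorem eq_three_or_eight_of_add_one_eq_sq {k x : ℕ} (hk : 0 < k) (hk₁₀ : k ≤ 10)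
    (h : k + 1 = x ^ 2) : k = 3 ∨ k = 8 := by
  have : x ≤ 3 := by nlinarith
  interval_cases x <;> omega

theorem sixteen_mul_sq_lt {k b c : ℕ} (hc : 4 * k * b < c) (hcb : c ^ 2 ≤ b ^ 3) :
    16 * k ^ 2 < b := by
  refine Nat.lt_of_mul_lt_mul_right (a := b ^ 2) ?_
  calc 16 * k ^ 2 * b ^ 2 = (4 * k * b) ^ 2 := by ring
    _ < c ^ 2 := Nat.pow_lt_pow_left hc two_ne_zero
    _ ≤ b * b ^ 2 := by rw [← pow_succ']; exact hcb

theorem le_of_sq_pair_one_three {b X Y : ℕ} (hX : b + 1 = X ^ 2) (hY : 3 * b + 1 = Y ^ 2)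
    (hb : b < 1680) : b ≤ 120 := by
  have key : ∀ X < 41, ∀ Y < 71, 3 * X ^ 2 = Y ^ 2 + 2 → X ^ 2 ≤ 121 := by decide
  linarith [key X (by nlinarith) Y (by nlinarith) (by linarith)]

theorem le_of_sq_pair_one_eight {b X Y : ℕ} (hX : b + 1 = X ^ 2) (hY : 8 * b + 1 = Y ^ 2)
    (hb : b < 1680) : b ≤ 528 := by
  have key : ∀ X < 41, ∀ Y < 116, 8 * X ^ 2 = Y ^ 2 + 7 → X ^ 2 ≤ 529 := by decide
  linarith [key X (by nlinarith) Y (by nlinarith) (by linarith)]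

theorem le_of_sq_pair_two_four {b X Y : ℕ} (hX : 2 * b + 1 = X ^ 2) (hY : 4 * b + 1 = Y ^ 2)
    (hb : b < 1680) : b ≤ 420 := by
  have key : ∀ X < 58, ∀ Y < 82, 2 * X ^ 2 = Y ^ 2 + 1 → X ^ 2 ≤ 841 := by decide
  linarith [key X (by nlinarith) Y (by nlinarith) (by linarith)]

theorem le_sixteen_mul_sq_of_sq_pair {m n b X Y : ℕ} (hmn : m * n = 3 ∨ m * n = 8)
    (hX : m * b + 1 = X ^ 2) (hY : n * b + 1 = Y ^ 2) (hb : b < 1680) :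
    b ≤ 16 * (m * n) ^ 2 := by
  have hm : m ≤ 8 := by
    rcases hmn with h | h <;>
      exact (Nat.le_of_dvd (by norm_num) (Dvd.intro n h)).trans (by norm_num)
  interval_cases m <;> rcases hmn with h | h <;> try omega
  · obtain rfl : n = 3 := by omega
    linarith [le_of_sq_pair_one_three (by simpa using hX) hY hb]
  · obtain rfl : n = 8 := by omega
    linarith [le_of_sq_pair_one_eight (by simpa using hX) hY hb]
  · obtain rfl : n = 4 := by omega
    linarith [le_of_sq_pair_two_four hX hY hb]
  · obtain rfl : n = 1 := by omega
    linarith [le_of_sq_pair_one_three (by simpa using hY) hX hb]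
  · obtain rfl : n = 2 := by omega
    linarith [le_of_sq_pair_two_four hY hX hb]
  · obtain rfl : n = 1 := by omega
    linarith [le_of_sq_pair_one_eight (by simpa using hY) hX hb]

theorem le_of_sixteen_mul_sq_lt {m n b x X Y : ℕ} (hm : 0 < m) (hn : 0 < n)
    (hx : m * n + 1 = x ^ 2) (hX : m * b + 1 = X ^ 2) (hY : n * b + 1 = Y ^ 2)
    (hb : 16 * (m * n) ^ 2 < b) : 1680 ≤ b := by
  by_contra! hlt
  have hmn : m * n ≤ 10 := by
    by_contra! h
    have : 11 ^ 2 ≤ (m * n) ^ 2 := Nat.pow_le_pow_left h 2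
    omega
  have := le_sixteen_mul_sq_of_sq_pair
    (eq_three_or_eight_of_add_one_eq_sq (Nat.mul_pos hm hn) hmn hx) hX hY hlt
  omega

theorem add_add_two_mul_lt_sq {b c t : ℕ} (hb : 1680 ≤ b) (hcb : c ^ 2 ≤ b ^ 3)
    (ht : b * c + 1 = t ^ 2) : b + c + 2 * t < b ^ 2 := by
  have hb2 : 1680 * b ≤ b ^ 2 := by nlinarith
  have hb4 : 1680 * b ^ 3 ≤ b ^ 4 := by nlinarith
  have hc : 40 * c ≤ b ^ 2 := by
    refine (Nat.pow_le_pow_iff_left two_ne_zero).mp ?_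
    nlinarith
  have htb : 4 * t ≤ b ^ 2 := by
    refine (Nat.pow_le_pow_iff_left two_ne_zero).mp ?_
    nlinarith
  omega

theorem quintuple_Kind2i_bound_1 (a b c d e : ℕ)
    (hquin : DiophantineQuintuple a b c d e) (hkind : Kind2i a b c d) :
    1680 ≤ b ∧ 10 ^ 8 ≤ d := by
  obtain ⟨ha, -, -, -, -, ⟨r, hr⟩, ⟨s, hs⟩, -, -, ⟨t, ht⟩, ⟨u, hu⟩, -, ⟨v, hv⟩, -, -⟩ := hquin
  obtain ⟨hab, hbd, -, hc, hcb⟩ := hkind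
  replace hcb := sq_le_cube_of_le_rpow hcb
  have hb : 0 < b := by omega
  have hr_le : r ≤ a * b := le_of_add_one_eq_sq (Nat.mul_pos ha hb) hr
  obtain ⟨N, x, y, hN, hx, hy, hcN⟩ := Nat.exists_lower_triple ha hb hr hs ht
    (by linarith [Nat.mul_pos ha hb])
  have hk : 16 * (a * N) ^ 2 < b := sixteen_mul_sq_lt (by linarith) hcb
  have hb₀ : 1680 ≤ b := le_of_sixteen_mul_sq_lt ha hN hx hr (mul_comm b N ▸ hy) hk
  refine ⟨hb₀, ?_⟩
  obtain ⟨F, -, -, hF, -, -, hdF⟩ := Nat.exists_lower_triple hb (by omega) ht hu hv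
    ((add_add_two_mul_lt_sq hb₀ hcb ht).trans_le hbd)
  have h12 : 12 * b ≤ c :=
    calc 12 * b ≤ 4 * (a * N) * b := by
          have := three_le_of_add_one_eq_sq (Nat.mul_pos ha hN) hx; gcongr; omega
      _ ≤ c := by linarith
  calc 10 ^ 8 ≤ 48 * (b * b) := by have := Nat.mul_le_mul hb₀ hb₀; omega
    _ ≤ 4 * b * c := by have := Nat.mul_le_mul_left (4 * b) h12; linarith
    _ ≤ 4 * b * c * F := Nat.le_mul_of_pos_right _ hF
    _ ≤ d := by omega
end

section
/- For every integer N ≥ 2, the sum over n from 2 to N of d(n^2 + 1) is strictly less than 2N·(3π^{-2}·(log N)^2 + 1.3949·log N + 0.4107 + 3.253·N^{-1/3}). -/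
/-!
Every divisor `d > n` of `n² + 1` pairs with the divisor `(n² + 1) / d ≤ n`, so after swapping
the order of summation the sum is at most `2 ∑_{d ≤ N} ρ(d) (N / d + 1)`, where `ρ(d)` is the
number of square roots of `-1` modulo `d`. Both `ρ` and `1 ⋆ χ₄` are multiplicative, and
`ρ ≤ 1 ⋆ χ₄` on prime powers because `ℤ/pᵏℤ` is a local ring, in which `x² = -1` has at most the
two roots `±x` for odd `p`. Expanding `1 ⋆ χ₄`, each inner sum `∑_{e ≤ N/f} χ₄(e) (N / (e f) + 1)`
is alternating with decreasing terms, hence at most its first term; what remains is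
`2 ∑_{f ≤ N} (N / f + 1) ≤ 2 N (log N + 2)`, which is below the stated bound for all `N ≥ 2`.
-/

open Finset ArithmeticFunction
open scoped ArithmeticFunction.zeta

theorem IsLocalRing.eq_or_eq_neg_of_sq_eq_sq {R : Type*} [CommRing R] [IsLocalRing R]
    (h2 : IsUnit (2 : R)) {x y : R} (hx : IsUnit x) (h : y ^ 2 = x ^ 2) : y = x ∨ y = -x := by
  have hprod : (y - x) * (y + x) = 0 := by linear_combination h
  have hsum : IsUnit ((y + x) + (x - y)) := by
    convert h2.mul hx using 1
    ring
  rcases IsLocalRing.isUnit_or_isUnit_of_isUnit_add hsum with hu | hu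
  · exact Or.inl (sub_eq_zero.mp (hu.mul_left_eq_zero.mp hprod))
  · rw [← neg_sub, neg_mul, neg_eq_zero, hu.mul_right_eq_zero] at hprod
    exact Or.inr (eq_neg_of_add_eq_zero_left hprod)

theorem IsLocalRing.card_sq_add_one_eq_zero_le_two {R : Type*} [CommRing R] [IsLocalRing R]
    (h2 : IsUnit (2 : R)) : Nat.card {x : R // x ^ 2 + 1 = 0} ≤ 2 := by
  rcases isEmpty_or_nonempty {x : R // x ^ 2 + 1 = 0} with h | ⟨⟨x, hx⟩⟩
  · simp
  have hxu : IsUnit x := IsUnit.of_mul_eq_one (-x) (by linear_combination -hx)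
  have hsub : {y : R | y ^ 2 + 1 = 0} ⊆ {x, -x} := fun y (hy : y ^ 2 + 1 = 0) =>
    eq_or_eq_neg_of_sq_eq_sq h2 hxu (by linear_combination hy - hx)
  calc Nat.card {x : R // x ^ 2 + 1 = 0} = Set.ncard {y : R | y ^ 2 + 1 = 0} :=
        Nat.card_coe_set_eq _
    _ ≤ 2 := (Set.ncard_le_ncard hsub).trans ((Set.ncard_insert_le _ _).trans (by simp))

theorem ZMod.isLocalRing_prime_pow {p k : ℕ} (hp : p.Prime) (hk : k ≠ 0) :
    IsLocalRing (ZMod (p ^ k)) :=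
  have : Fact p.Prime := ⟨hp⟩
  have : Fact (1 < p ^ k) := ⟨Nat.one_lt_pow hk hp.one_lt⟩
  IsLocalRing.of_surjective' (PadicInt.toZModPow k) (ZMod.ringHom_surjective _)

theorem ArithmeticFunction.IsMultiplicative.le_of_le_prime_pow {R : Type*} [CommSemiring R]
    [PartialOrder R] [IsOrderedRing R] {f g : ArithmeticFunction R} (hf : f.IsMultiplicative)
    (hg : g.IsMultiplicative) (hf0 : ∀ p k, p.Prime → k ≠ 0 → 0 ≤ f (p ^ k))
    (hfg : ∀ p k, p.Prime → k ≠ 0 → f (p ^ k) ≤ g (p ^ k)) (n : ℕ) : f n ≤ g n := by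
  rcases eq_or_ne n 0 with rfl | hn
  · simp
  rw [hf.multiplicative_factorization f hn, hg.multiplicative_factorization g hn]
  exact Finset.prod_le_prod
    (fun p hp => hf0 p _ (Nat.prime_of_mem_primeFactors hp) (Finsupp.mem_support_iff.mp hp))
    (fun p hp => hfg p _ (Nat.prime_of_mem_primeFactors hp) (Finsupp.mem_support_iff.mp hp))

noncomputable def sqrtNegOneCount : ArithmeticFunction ℕ :=
  toArithmeticFunction fun d => Nat.card {x : ZMod d // x ^ 2 + 1 = 0}

theorem sqrtNegOneCount_apply {d : ℕ} (hd : d ≠ 0) :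
    sqrtNegOneCount d = Nat.card {x : ZMod d // x ^ 2 + 1 = 0} := by
  simp [sqrtNegOneCount, toArithmeticFunction, hd]

theorem isMultiplicative_sqrtNegOneCount : sqrtNegOneCount.IsMultiplicative := by
  refine IsMultiplicative.iff_ne_zero.mpr ⟨?_, fun {m n} hm hn hmn => ?_⟩
  · rw [sqrtNegOneCount_apply one_ne_zero, Nat.card_eq_fintype_card]
    rfl
  · rw [sqrtNegOneCount_apply (mul_ne_zero hm hn), sqrtNegOneCount_apply hm,
      sqrtNegOneCount_apply hn, ← Nat.card_prod]
    refine Nat.card_congr (((ZMod.chineseRemainder hmn).toEquiv.subtypeEquiv fun x => ?_).trans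
      (Equiv.subtypeProdEquivProd (p := fun x : ZMod m => x ^ 2 + 1 = 0)
        (q := fun x : ZMod n => x ^ 2 + 1 = 0)))
    rw [← map_eq_zero_iff _ (ZMod.chineseRemainder hmn).injective, map_add, map_pow, map_one,
      Prod.ext_iff]
    rfl

theorem sqrtNegOneCount_eq_zero_of_dvd {d n : ℕ} (hdn : d ∣ n)
    (h : ∀ x : ZMod d, x ^ 2 + 1 ≠ 0) : sqrtNegOneCount n = 0 := by
  rcases eq_or_ne n 0 with rfl | hn
  · exact ArithmeticFunction.map_zero
  rw [sqrtNegOneCount_apply hn]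
  have : IsEmpty {x : ZMod n // x ^ 2 + 1 = 0} := ⟨fun x => h (ZMod.castHom hdn (ZMod d) x) (by
    rw [← map_pow, ← map_one (ZMod.castHom hdn (ZMod d)), ← map_add, x.2, _root_.map_zero])⟩
  exact Nat.card_of_isEmpty

theorem sqrtNegOneCount_two_pow_le_one {k : ℕ} (hk : k ≠ 0) : sqrtNegOneCount (2 ^ k) ≤ 1 := by
  obtain _ | _ | k := k
  · exact absurd rfl hk
  · rw [pow_one, sqrtNegOneCount_apply two_ne_zero, Nat.card_eq_fintype_card]
    decide
  · have h4 : 4 ∣ 2 ^ (k + 2) := pow_dvd_pow 2 (by omega : 2 ≤ k + 2)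
    exact (sqrtNegOneCount_eq_zero_of_dvd h4 (by decide)).trans_le zero_le_one

theorem sqrtNegOneCount_prime_pow_of_mod_four_eq_three {p k : ℕ} (hp : p.Prime) (hp3 : p % 4 = 3)
    (hk : k ≠ 0) : sqrtNegOneCount (p ^ k) = 0 := by
  have := Fact.mk hp
  refine sqrtNegOneCount_eq_zero_of_dvd (dvd_pow_self p hk) fun x hx => ?_
  exact ZMod.exists_sq_eq_neg_one_iff.mp ⟨x, by linear_combination -hx⟩ hp3

theorem sqrtNegOneCount_prime_pow_le_two {p k : ℕ} (hp : p.Prime) (hp2 : p ≠ 2) (hk : k ≠ 0) :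
    sqrtNegOneCount (p ^ k) ≤ 2 := by
  have := ZMod.isLocalRing_prime_pow hp hk
  rw [sqrtNegOneCount_apply (pow_ne_zero k hp.ne_zero)]
  refine IsLocalRing.card_sq_add_one_eq_zero_le_two ?_
  exact_mod_cast (ZMod.isUnit_iff_coprime 2 (p ^ k)).mpr
    (Nat.Coprime.pow_right k ((Nat.coprime_primes Nat.prime_two hp).mpr hp2.symm))

noncomputable def zetaMulChi4 : ArithmeticFunction ℤ :=
  (ζ : ArithmeticFunction ℤ) * toArithmeticFunction (ZMod.χ₄ ·)

theorem isMultiplicative_zetaMulChi4 : zetaMulChi4.IsMultiplicative :=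
  isMultiplicative_zeta.natCast.mul (DirichletCharacter.isMultiplicative_toArithmeticFunction _)

theorem zetaMulChi4_prime_pow {p : ℕ} (hp : p.Prime) (k : ℕ) :
    zetaMulChi4 (p ^ k) = ∑ i ∈ range (k + 1), ZMod.χ₄ p ^ i := by
  rw [zetaMulChi4, coe_zeta_mul_apply, Nat.sum_divisors_prime_pow hp]
  refine sum_congr rfl fun i _ => ?_
  rw [← DirichletCharacter.apply_eq_toArithmeticFunction_apply _ (pow_ne_zero i hp.ne_zero),
    Nat.cast_pow, map_pow]

theorem sqrtNegOneCount_le_zetaMulChi4 (n : ℕ) : (sqrtNegOneCount n : ℤ) ≤ zetaMulChi4 n := by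
  refine isMultiplicative_sqrtNegOneCount.natCast.le_of_le_prime_pow isMultiplicative_zetaMulChi4
    (fun _ _ _ _ => by simp) (fun p k hp hk => ?_) n
  rw [natCoe_apply, zetaMulChi4_prime_pow hp]
  rcases hp.eq_two_or_odd' with rfl | hodd
  · rw [show ZMod.χ₄ (2 : ℕ) = 0 from rfl, sum_range_succ']
    simpa using sqrtNegOneCount_two_pow_le_one hk
  · rcases Nat.odd_mod_four_iff.mp (Nat.odd_iff.mp hodd) with h1 | h3
    · rw [ZMod.χ₄_nat_one_mod_four h1]
      simp only [one_pow, sum_const, card_range, nsmul_eq_mul, mul_one]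
      have := sqrtNegOneCount_prime_pow_le_two hp (by omega) hk
      push_cast
      omega
    · rw [sqrtNegOneCount_prime_pow_of_mod_four_eq_three hp h3 hk,
        ZMod.χ₄_nat_three_mod_four h3, neg_one_geom_sum]
      split_ifs <;> norm_num

theorem card_divisors_le_two_mul_card_filter_le {m n : ℕ} (hm : m < (n + 1) ^ 2) :
    #m.divisors ≤ 2 * #{d ∈ m.divisors | d ≤ n} := by
  have hlarge : #{d ∈ m.divisors | ¬d ≤ n} ≤ #{d ∈ m.divisors | d ≤ n} := by
    refine card_le_card_of_injOn (m / ·) (fun d hd => ?_) (fun a ha b hb hab => ?_)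
    · simp only [mem_coe, mem_filter, Nat.mem_divisors, not_le] at hd ⊢
      obtain ⟨⟨hdm, hm0⟩, hnd⟩ := hd
      refine ⟨⟨Nat.div_dvd_of_dvd hdm, hm0⟩,
        Nat.lt_succ_iff.mp ((Nat.div_lt_iff_lt_mul (by omega)).mpr ?_)⟩
      nlinarith
    · simp only [mem_coe, mem_filter, Nat.mem_divisors] at ha hb
      rw [← Nat.div_div_self ha.1.1 ha.1.2, ← Nat.div_div_self hb.1.1 hb.1.2]
      exact congrArg (m / ·) hab
  have := card_filter_add_card_filter_not (s := m.divisors) (· ≤ n)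
  omega

theorem card_filter_dvd_sq_add_one_le {d : ℕ} (hd : d ≠ 0) (N : ℕ) :
    #{n ∈ Icc 1 N | d ∣ n ^ 2 + 1} ≤ sqrtNegOneCount d * (N / d + 1) := by
  have : NeZero d := ⟨hd⟩
  rw [sqrtNegOneCount_apply hd, Nat.card_eq_fintype_card, Fintype.card_subtype,
    ← card_range (N / d + 1), ← card_product]
  refine card_le_card_of_injOn (fun n => ((n : ZMod d), n / d)) (fun n hn => ?_)
    (fun a _ b _ hab => ?_)
  · simp only [mem_coe, mem_filter, mem_Icc, mem_product, mem_univ, true_and, mem_range] at hn ⊢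
    refine ⟨?_, Nat.lt_succ_of_le (Nat.div_le_div_right hn.1.2)⟩
    exact_mod_cast (ZMod.natCast_eq_zero_iff _ _).mpr hn.2
  · simp only [Prod.mk.injEq] at hab
    rw [← Nat.mod_add_div a d, ← Nat.mod_add_div b d,
      (ZMod.natCast_eq_natCast_iff' a b d).mp hab.1, hab.2]

theorem sum_card_divisors_sq_add_one_le (N : ℕ) :
    ∑ n ∈ Icc 1 N, #(n ^ 2 + 1).divisors ≤
      2 * ∑ d ∈ Icc 1 N, sqrtNegOneCount d * (N / d + 1) := by
  calc ∑ n ∈ Icc 1 N, #(n ^ 2 + 1).divisors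
      ≤ ∑ n ∈ Icc 1 N, 2 * #{d ∈ Icc 1 N | d ∣ n ^ 2 + 1} := by
        refine sum_le_sum fun n hn => ?_
        obtain ⟨hn1, hnN⟩ := mem_Icc.mp hn
        refine (card_divisors_le_two_mul_card_filter_le (by nlinarith)).trans ?_
        gcongr 2 * #?_
        intro d hd
        simp only [mem_filter, Nat.mem_divisors, mem_Icc] at hd ⊢
        exact ⟨⟨Nat.pos_of_dvd_of_pos hd.1.1 (by positivity), hd.2.trans hnN⟩, hd.1.1⟩
    _ = 2 * ∑ d ∈ Icc 1 N, #{n ∈ Icc 1 N | d ∣ n ^ 2 + 1} := by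
        rw [← mul_sum]
        exact congrArg _ (sum_card_bipartiteAbove_eq_sum_card_bipartiteBelow _)
    _ ≤ 2 * ∑ d ∈ Icc 1 N, sqrtNegOneCount d * (N / d + 1) := by
        gcongr with d hd
        exact card_filter_dvd_sq_add_one_le (by have := (mem_Icc.mp hd).1; omega) N

theorem sum_range_chi4_mul_mem_Icc {u : ℕ → ℝ} (hu : Antitone u) (hu0 : ∀ n, 0 ≤ u n) (M : ℕ) :
    ∑ e ∈ range M, (ZMod.χ₄ (e + 1 : ℕ) : ℝ) * u e ∈ Set.Icc 0 (u 0) := by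
  induction M using Nat.twoStepInduction generalizing u with
  | zero => simpa using hu0 0
  | one => simpa using hu0 0
  | more M ih _ =>
    -- peeling off two terms: `S (M + 2) u = u 0 - S M (u ∘ (· + 2))`
    have hshift (e : ℕ) : ZMod.χ₄ (e + 1 + 1 + 1 : ℕ) = -ZMod.χ₄ (e + 1 : ℕ) := by
      have h : ∀ x : ZMod 4, ZMod.χ₄ (x + 2) = -ZMod.χ₄ x := by decide
      rw [← h]
      push_cast
      ring_nf
    obtain ⟨h0, h2⟩ := ih (u := fun n => u (n + 1 + 1)) (fun a b h => hu (by omega))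
      (fun n => hu0 _)
    have h20 : u (0 + 1 + 1) ≤ u 0 := hu (by omega)
    rw [sum_range_succ', sum_range_succ']
    simp only [hshift, Int.cast_neg, neg_mul, sum_neg_distrib]
    rw [show ZMod.χ₄ ((1 + 1 : ℕ) : ZMod 4) = 0 from rfl,
      show ZMod.χ₄ ((0 + 1 : ℕ) : ZMod 4) = 1 from rfl]
    simp only [Int.cast_zero, Int.cast_one, zero_mul, one_mul, add_zero]
    constructor <;> linarith

theorem sum_Icc_chi4_mul_le {v : ℕ → ℝ} (hv : AntitoneOn v (Set.Ici 1)) (hv0 : ∀ n, 0 ≤ v n)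
    (M : ℕ) : ∑ e ∈ Icc 1 M, (ZMod.χ₄ e : ℝ) * v e ≤ v 1 := by
  have := (sum_range_chi4_mul_mem_Icc (u := fun e => v (e + 1))
    (fun a b h => hv (by simp) (by simp) (by omega)) (fun _ => hv0 _) M).2
  rwa [range_eq_Ico, sum_Ico_add' (fun e : ℕ => (ZMod.χ₄ e : ℝ) * v e), zero_add,
    Ico_add_one_right_eq_Icc] at this

theorem sum_Icc_sum_divisorsAntidiagonal {M : Type*} [AddCommMonoid M] (h : ℕ → ℕ → M) (N : ℕ) :
    ∑ n ∈ Icc 1 N, ∑ x ∈ n.divisorsAntidiagonal, h x.1 x.2 =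
      ∑ a ∈ Icc 1 N, ∑ b ∈ Icc 1 (N / a), h a b := by
  rw [sum_sigma', sum_sigma']
  refine sum_nbij' (fun x => ⟨x.2.1, x.2.2⟩) (fun x => ⟨x.1 * x.2, (x.1, x.2)⟩) ?_ ?_ ?_
    (fun _ _ => rfl) (fun _ _ => rfl)
  · rintro ⟨n, a, b⟩ hx
    simp only [mem_sigma, mem_Icc, Nat.mem_divisorsAntidiagonal] at hx ⊢
    obtain ⟨⟨-, hN⟩, rfl, hab⟩ := hx
    obtain ⟨ha, hb⟩ := Nat.mul_ne_zero_iff.mp hab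
    refine ⟨⟨by omega, (Nat.le_mul_of_pos_right a (by omega)).trans hN⟩, by omega,
      (Nat.le_div_iff_mul_le (by omega)).mpr (by rwa [mul_comm])⟩
  · rintro ⟨a, b⟩ hx
    simp only [mem_sigma, mem_Icc, Nat.mem_divisorsAntidiagonal] at hx ⊢
    have hN := (Nat.le_div_iff_mul_le (by omega)).mp hx.2.2
    exact ⟨⟨Nat.mul_pos (by omega) (by omega), by rwa [mul_comm]⟩, trivial,
      Nat.mul_ne_zero (by omega) (by omega)⟩
  · rintro ⟨n, a, b⟩ hx
    simp only [mem_sigma, Nat.mem_divisorsAntidiagonal] at hx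
    simp [hx.2.1]

theorem sum_Icc_zetaMulChi4_mul_le {w : ℕ → ℝ} (hw : AntitoneOn w (Set.Ici 1))
    (hw0 : ∀ n, 0 ≤ w n) (N : ℕ) :
    ∑ n ∈ Icc 1 N, (zetaMulChi4 n : ℝ) * w n ≤ ∑ a ∈ Icc 1 N, w a := by
  have hexpand (n : ℕ) : (zetaMulChi4 n : ℝ) * w n =
      ∑ x ∈ n.divisorsAntidiagonal, (ZMod.χ₄ x.2 : ℝ) * w (x.1 * x.2) := by
    rw [Nat.sum_divisorsAntidiagonal' (fun a b => (ZMod.χ₄ b : ℝ) * w (a * b)), zetaMulChi4,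
      coe_zeta_mul_apply, Int.cast_sum, sum_mul]
    refine sum_congr rfl fun d hd => ?_
    rw [Nat.div_mul_cancel (Nat.dvd_of_mem_divisors hd),
      ← DirichletCharacter.apply_eq_toArithmeticFunction_apply _
        (Nat.ne_of_gt (Nat.pos_of_mem_divisors hd))]
  rw [sum_congr rfl fun n _ => hexpand n,
    sum_Icc_sum_divisorsAntidiagonal (fun a b => (ZMod.χ₄ b : ℝ) * w (a * b))]
  refine sum_le_sum fun a ha => ?_
  have ha1 : 1 ≤ a := (mem_Icc.mp ha).1
  simpa using sum_Icc_chi4_mul_le (v := fun b => w (a * b))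
    (fun b hb c hc hbc => hw (Nat.mul_le_mul ha1 hb) (Nat.mul_le_mul ha1 hc)
      (Nat.mul_le_mul_left a hbc)) (fun _ => hw0 _) (N / a)

theorem sum_Icc_div_add_one_le (N : ℕ) :
    ∑ a ∈ Icc 1 N, ((N : ℝ) / a + 1) ≤ N * (Real.log N + 2) := by
  have := harmonic_le_one_add_log N
  rw [harmonic_eq_sum_Icc] at this
  push_cast at this
  rw [sum_add_distrib]
  simp only [div_eq_mul_inv, ← mul_sum, sum_const, Nat.card_Icc, add_tsub_cancel_right,
    nsmul_eq_mul, mul_one]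
  nlinarith [(Nat.cast_nonneg N : (0 : ℝ) ≤ N)]

theorem sum_Icc_sqrtNegOneCount_mul_le (N : ℕ) :
    ∑ d ∈ Icc 1 N, (sqrtNegOneCount d : ℝ) * ((N / d : ℕ) + 1) ≤ N * (Real.log N + 2) := by
  calc ∑ d ∈ Icc 1 N, (sqrtNegOneCount d : ℝ) * ((N / d : ℕ) + 1)
      ≤ ∑ d ∈ Icc 1 N, (zetaMulChi4 d : ℝ) * ((N : ℝ) / d + 1) := by
        refine sum_le_sum fun d _ => ?_
        have hρ : (sqrtNegOneCount d : ℝ) ≤ zetaMulChi4 d :=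
          by exact_mod_cast sqrtNegOneCount_le_zetaMulChi4 d
        exact mul_le_mul hρ (by gcongr; exact Nat.cast_div_le) (by positivity)
          ((Nat.cast_nonneg _).trans hρ)
    _ ≤ ∑ a ∈ Icc 1 N, ((N : ℝ) / a + 1) := by
        refine sum_Icc_zetaMulChi4_mul_le (fun a ha b hb hab => ?_) (fun _ => by positivity) N
        have ha0 : (0 : ℝ) < a := by exact_mod_cast ha
        gcongr
    _ ≤ N * (Real.log N + 2) := sum_Icc_div_add_one_le N

theorem log_add_two_lt {x : ℝ} (hx : 1 ≤ x) :
    Real.log x + 2 < 3 / Real.pi ^ 2 * Real.log x ^ 2 + 1.3949 * Real.log x + 0.4107 +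
      3.253 * x ^ (-(1 : ℝ) / 3) := by
  have hL0 : 0 ≤ Real.log x := Real.log_nonneg hx
  have hE : 0 < x ^ (-(1 : ℝ) / 3) := Real.rpow_pos_of_pos (by linarith) _
  rcases lt_or_ge x 8 with hx8 | hx8
  · have hE8 : (1 / 2 : ℝ) < x ^ (-(1 : ℝ) / 3) := by
      have h8 : (8 : ℝ) ^ (-(1 : ℝ) / 3) = 1 / 2 := by
        rw [show (8 : ℝ) = 2 ^ (3 : ℝ) by norm_num, ← Real.rpow_mul (by norm_num)]
        norm_num
      rw [← h8]
      exact Real.rpow_lt_rpow_of_neg (by linarith) hx8 (by norm_num)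
    have : 0 ≤ 3 / Real.pi ^ 2 * Real.log x ^ 2 := by positivity
    linarith
  · have hL2 : 2 ≤ Real.log x := by
      have h8 : Real.log 8 = 3 * Real.log 2 := by
        rw [show (8 : ℝ) = 2 ^ 3 by norm_num, Real.log_pow]
        norm_num
      linarith [Real.log_le_log (by norm_num) hx8, Real.log_two_gt_d9]
    have hc : 0.3 ≤ 3 / Real.pi ^ 2 := by
      rw [le_div_iff₀ (by positivity)]
      nlinarith [Real.pi_lt_d2, Real.pi_pos]
    nlinarith

theorem sum_divisor_count_sq_add_one_lt (N : ℕ) (hN : 2 ≤ N) :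
    (∑ n ∈ Finset.Icc 2 N, ((n ^ 2 + 1).divisors.card : ℝ)) <
      2 * N * (3 / Real.pi ^ 2 * Real.log N ^ 2 + 1.3949 * Real.log N + 0.4107 +
        3.253 * (N : ℝ) ^ (-(1 : ℝ) / 3)) := by
  have hN0 : (0 : ℝ) < N := by positivity
  calc (∑ n ∈ Icc 2 N, ((n ^ 2 + 1).divisors.card : ℝ))
      ≤ ∑ n ∈ Icc 1 N, ((n ^ 2 + 1).divisors.card : ℝ) :=
        sum_le_sum_of_subset_of_nonneg (Icc_subset_Icc_left (by omega)) fun _ _ _ => by positivity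
    _ ≤ 2 * ∑ d ∈ Icc 1 N, (sqrtNegOneCount d : ℝ) * ((N / d : ℕ) + 1) := by
        exact_mod_cast sum_card_divisors_sq_add_one_le N
    _ ≤ 2 * (N * (Real.log N + 2)) := by gcongr; exact sum_Icc_sqrtNegOneCount_mul_le N
    _ < _ := by
        rw [mul_assoc]
        exact mul_lt_mul_of_pos_left (mul_lt_mul_of_pos_left
          (log_add_two_lt (Nat.one_le_cast.mpr (by omega))) hN0) two_pos
end
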